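/- A word over the alphabet {E, N, W, S} is a fighting fish if and only if it can be obtained from one of the two words EW or NS by at least one application of the operations ∇_k and △_k restricted to k ≥ 1. In particular, every fighting fish is a generalized fighting fish. -/

import Mathlib

/-- The four-letter alphabet of steps. -/
inductive Letter : Type
  | E | N | W | S
deriving DecidableEq, Repr

open Letter

/-- Fighting fish: words obtainable from `ENWS` by upper, lower and double gluings. -/
inductive IsFF : List Letter → Prop
  | base : IsFF [E, N, W, S]
  | upper (u v : List Letter) :
      IsFF (u ++ [W] ++ v) → IsFF (u ++ [N, W, S] ++ v)
  | lower (u v : List Letter) :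
      IsFF (u ++ [N] ++ v) → IsFF (u ++ [E, N, W] ++ v)
  | double (u v : List Letter) :
      IsFF (u ++ [W, N] ++ v) → IsFF (u ++ [N, W] ++ v)

/-- Generalized fighting fish: words obtainable from the empty word by the
operations `∇_k` (replace `N^k` by `E N^k W`) and `△_k` (replace `W^k` by `N W^k S`),
for `k ≥ 0`. -/
inductive IsGFF : List Letter → Prop
  | base : IsGFF []
  | nabla (u v : List Letter) (k : ℕ) :
      IsGFF (u ++ List.replicate k N ++ v) →
      IsGFF (u ++ [E] ++ List.replicate k N ++ [W] ++ v)
  | delta (u v : List Letter) (k : ℕ) :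
      IsGFF (u ++ List.replicate k W ++ v) →
      IsGFF (u ++ [N] ++ List.replicate k W ++ [S] ++ v)

/-- The latitude of a word: number of `N`'s minus number of `S`'s. -/
def lat (w : List Letter) : ℤ := (w.count N : ℤ) - (w.count S : ℤ)

/-- The longitude of a word: number of `E`'s minus number of `W`'s. -/
def long (w : List Letter) : ℤ := (w.count E : ℤ) - (w.count W : ℤ)

/-- The size of a word: half its length. -/
def size (w : List Letter) : ℕ := w.length / 2

/-- One application of an operation `∇_k` or `△_k` with `k ≥ 1`. -/
inductive PosStep : List Letter → List Letter → Prop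
  | nabla (u v : List Letter) (k : ℕ) (hk : 1 ≤ k) :
      PosStep (u ++ List.replicate k N ++ v)
        (u ++ [E] ++ List.replicate k N ++ [W] ++ v)
  | delta (u v : List Letter) (k : ℕ) (hk : 1 ≤ k) :
      PosStep (u ++ List.replicate k W ++ v)
        (u ++ [N] ++ List.replicate k W ++ [S] ++ v)

/-!
A step `∇_k` (resp. `△_k`) with `k ≥ 1` is a lower (resp. upper) gluing followed by `k - 1`
double gluings, so fighting fish are closed under these steps; and `ENWS` is the only word one
step away from `EW` or `NS`. Conversely, lower and upper gluings are `∇_1` and `△_1`, while a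
double gluing `WN ↦ NW` can be pushed back past any step: either it commutes with the step, or
the exchanged `W` and `N` straddle the boundary of the inserted block and the two moves fuse into
a single `∇_{k+1}` or `△_{k+1}`. As `EW` contains no factor `WN`, the double gluings eventually
disappear.
-/

theorem Relation.TransGen.tail_of_commute {α : Type*} {r s : α → α → Prop}
    (hcomm : ∀ {a b c}, r a b → s b c → (∃ b', s a b' ∧ r b' c) ∨ r a c)
    {a b c : α} (ha : ∀ x, ¬ s a x) (hab : Relation.TransGen r a b) (hbc : s b c) :
    Relation.TransGen r a c := by
  induction hab generalizing c with
  | single hab =>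
    rcases hcomm hab hbc with ⟨b', hab', -⟩ | hac
    · exact absurd hab' (ha b')
    · exact .single hac
  | tail hab hbd ih =>
    rcases hcomm hbd hbc with ⟨b', hbb', hb'c⟩ | hbc'
    · exact (ih hbb').tail hb'c
    · exact hab.tail hbc'

theorem List.append_pair_append_eq_cases {α : Type*} {x y : α} {a b u m v : List α}
    (hm : m ≠ []) (h : a ++ [x, y] ++ b = u ++ m ++ v) :
    (∃ t, u = a ++ [x, y] ++ t ∧ b = t ++ m ++ v) ∨
    (∃ t, a = u ++ m ++ t ∧ v = t ++ [x, y] ++ b) ∨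
    (∃ t, u = a ++ [x] ∧ m = y :: t ∧ b = t ++ v) ∨
    (∃ t, a = u ++ t ∧ m = t ++ [x] ∧ v = y :: b) ∨
    [x, y] <:+: m := by
  simp only [List.append_assoc] at h
  rcases List.append_eq_append_iff.mp h with ⟨c, rfl, hc⟩ | ⟨c, rfl, hc⟩
  · obtain ⟨z, m, rfl⟩ := List.exists_cons_of_ne_nil hm
    rcases c with _ | ⟨x', _ | ⟨y', t⟩⟩
    · rcases m with _ | ⟨z', m⟩
      · simp only [List.nil_append, List.cons_append, List.cons.injEq] at hc
        obtain ⟨rfl, rfl⟩ := hc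
        exact .inr <| .inr <| .inr <| .inl ⟨[], by simp⟩
      · simp only [List.nil_append, List.cons_append, List.cons.injEq] at hc
        obtain ⟨rfl, rfl, -⟩ := hc
        exact .inr <| .inr <| .inr <| .inr ⟨[], m, by simp⟩
    · simp only [List.cons_append, List.nil_append, List.cons.injEq] at hc
      obtain ⟨rfl, rfl, rfl⟩ := hc
      exact .inr <| .inr <| .inl ⟨m, by simp⟩
    · simp only [List.cons_append, List.cons.injEq] at hc
      obtain ⟨rfl, rfl, rfl⟩ := hc
      exact .inl ⟨t, by simp⟩
  · rcases List.append_eq_append_iff.mp hc with ⟨d, rfl, rfl⟩ | ⟨d, rfl, hd⟩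
    · exact .inr <| .inl ⟨d, by simp⟩
    · rcases d with _ | ⟨x', _ | ⟨y', t⟩⟩
      · simp only [List.append_nil, List.nil_append] at hd ⊢
        exact .inr <| .inl ⟨[], by simp [hd]⟩
      · simp only [List.cons_append, List.nil_append, List.cons.injEq] at hd
        obtain ⟨rfl, rfl⟩ := hd
        exact .inr <| .inr <| .inr <| .inl ⟨c, by simp⟩
      · simp only [List.cons_append, List.cons.injEq] at hd
        obtain ⟨rfl, rfl, rfl⟩ := hd
        exact .inr <| .inr <| .inr <| .inr ⟨c, t, by simp⟩

def DoubleGluing (w w' : List Letter) : Prop :=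
  ∃ a b, w = a ++ [W, N] ++ b ∧ w' = a ++ [N, W] ++ b

theorem not_WN_infix_E_replicate_N_W (k : ℕ) :
    ¬ [W, N] <:+: E :: (List.replicate k N ++ [W]) := by
  intro h
  have h' := h.reverse
  simp only [List.reverse_cons, List.reverse_append, List.reverse_replicate, List.reverse_nil,
    List.nil_append, List.cons_append, List.infix_cons_iff, List.cons_prefix_cons] at h'
  rcases h' with ⟨h', -⟩ | h'
  · cases h'
  · simpa using h'.subset (by simp : W ∈ [N, W])

theorem not_WN_infix_N_replicate_W_S (k : ℕ) :
    ¬ [W, N] <:+: N :: (List.replicate k W ++ [S]) := by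
  rw [List.infix_cons_iff, List.cons_prefix_cons]
  rintro (⟨h, -⟩ | h)
  · cases h
  · simpa using h.subset (by simp : N ∈ [W, N])

theorem PosStep.commute_doubleGluing {w w' w'' : List Letter} (h : PosStep w w')
    (hg : DoubleGluing w' w'') :
    (∃ x, DoubleGluing w x ∧ PosStep x w'') ∨ PosStep w w'' := by
  obtain ⟨a, b, hw', rfl⟩ := hg
  cases h with
  | nabla u v k hk =>
    have hm : E :: (List.replicate k N ++ [W]) ≠ [] := List.cons_ne_nil _ _
    rcases List.append_pair_append_eq_cases hm (by simpa using hw'.symm) with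
      ⟨t, rfl, rfl⟩ | ⟨t, rfl, rfl⟩ | ⟨t, -, hm, -⟩ | ⟨t, rfl, hm, rfl⟩ | hinf
    · left
      refine ⟨_, ⟨a, t ++ List.replicate k N ++ v, by simp, rfl⟩, ?_⟩
      simpa using PosStep.nabla (a ++ [N, W] ++ t) v k hk
    · left
      refine ⟨_, ⟨u ++ List.replicate k N ++ t, b, by simp, rfl⟩, ?_⟩
      simpa using PosStep.nabla u (t ++ [N, W] ++ b) k hk
    · simp at hm
    · obtain rfl : t = E :: List.replicate k N :=
        List.append_cancel_right (by simpa using hm.symm)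
      right
      simpa [List.replicate_succ'] using PosStep.nabla u b (k + 1) (by omega)
    · exact absurd hinf (not_WN_infix_E_replicate_N_W k)
  | delta u v k hk =>
    have hm : N :: (List.replicate k W ++ [S]) ≠ [] := List.cons_ne_nil _ _
    rcases List.append_pair_append_eq_cases hm (by simpa using hw'.symm) with
      ⟨t, rfl, rfl⟩ | ⟨t, rfl, rfl⟩ | ⟨t, rfl, hm, rfl⟩ | ⟨t, -, hm, -⟩ | hinf
    · left
      refine ⟨_, ⟨a, t ++ List.replicate k W ++ v, by simp, rfl⟩, ?_⟩
      simpa using PosStep.delta (a ++ [N, W] ++ t) v k hk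
    · left
      refine ⟨_, ⟨u ++ List.replicate k W ++ t, b, by simp, rfl⟩, ?_⟩
      simpa using PosStep.delta u (t ++ [N, W] ++ b) k hk
    · obtain rfl : t = List.replicate k W ++ [S] := by simpa using hm.symm
      right
      simpa [List.replicate_succ] using PosStep.delta a v (k + 1) (by omega)
    · have hlast := congrArg List.getLast? hm
      rw [List.getLast?_cons, List.getLast?_append] at hlast
      simp at hlast
    · exact absurd hinf (not_WN_infix_N_replicate_W_S k)

theorem IsFF.transGen_posStep {s w : List Letter} (hs : PosStep s [E, N, W, S])
    (hirr : ¬ [W, N] <:+: s) (h : IsFF w) : Relation.TransGen PosStep s w := by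
  induction h with
  | base => exact .single hs
  | upper u v _ ih => exact ih.tail (by simpa using PosStep.delta u v 1 le_rfl)
  | lower u v _ ih => exact ih.tail (by simpa using PosStep.nabla u v 1 le_rfl)
  | double u v _ ih =>
    exact ih.tail_of_commute PosStep.commute_doubleGluing
      (fun _ ⟨a, b, hs, _⟩ => hirr ⟨a, b, hs.symm⟩) ⟨u, v, rfl, rfl⟩

theorem IsFF.move_W_past_replicate_N (j : ℕ) {u v : List Letter}
    (h : IsFF (u ++ [W] ++ List.replicate j N ++ v)) :
    IsFF (u ++ List.replicate j N ++ [W] ++ v) := by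
  induction j generalizing u with
  | zero => simpa using h
  | succ j ih =>
    have h' := IsFF.double u (List.replicate j N ++ v) (by simpa [List.replicate_succ] using h)
    simpa [List.replicate_succ] using ih (u := u ++ [N]) (by simpa using h')

theorem IsFF.move_N_past_replicate_W (j : ℕ) {u v : List Letter}
    (h : IsFF (u ++ List.replicate j W ++ [N] ++ v)) :
    IsFF (u ++ [N] ++ List.replicate j W ++ v) := by
  induction j generalizing u with
  | zero => simpa using h
  | succ j ih =>
    have h' := ih (u := u ++ [W]) (by simpa [List.replicate_succ] using h)
    simpa [List.replicate_succ] using IsFF.double u (List.replicate j W ++ v) (by simpa using h')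

theorem IsFF.of_posStep {w w' : List Letter} (h : PosStep w w') (hw : IsFF w) : IsFF w' := by
  cases h with
  | nabla u v k hk =>
    obtain ⟨j, rfl⟩ := Nat.exists_eq_add_of_le' hk
    have h' := IsFF.lower u (List.replicate j N ++ v) (by simpa [List.replicate_succ] using hw)
    simpa [List.replicate_succ] using
      IsFF.move_W_past_replicate_N j (u := u ++ [E, N]) (by simpa using h')
  | delta u v k hk =>
    obtain ⟨j, rfl⟩ := Nat.exists_eq_add_of_le' hk
    have h' := IsFF.upper (u ++ List.replicate j W) v (by simpa [List.replicate_succ'] using hw)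
    simpa [List.replicate_succ'] using
      IsFF.move_N_past_replicate_W j (v := [W, S] ++ v) (by simpa using h')

theorem PosStep.eq_ENWS {s w : List Letter} (hs : s = [E, W] ∨ s = [N, S])
    (h : PosStep s w) : w = [E, N, W, S] := by
  cases h with
  | nabla u v k hk | delta u v k hk =>
    rcases u with _ | ⟨a, _ | ⟨a', u⟩⟩ <;> rcases k with _ | _ | k <;>
      simp_all [List.replicate_succ]

theorem IsFF.of_transGen_posStep {s w : List Letter} (hs : s = [E, W] ∨ s = [N, S])
    (h : Relation.TransGen PosStep s w) : IsFF w := by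
  induction h with
  | single h => exact h.eq_ENWS hs ▸ .base
  | tail _ h ih => exact ih.of_posStep h

theorem IsGFF.of_posStep {w w' : List Letter} (h : PosStep w w') (hw : IsGFF w) : IsGFF w' := by
  cases h with
  | nabla u v k _ => exact .nabla u v k hw
  | delta u v k _ => exact .delta u v k hw

theorem IsGFF.of_transGen_posStep {s w : List Letter} (hs : IsGFF s)
    (h : Relation.TransGen PosStep s w) : IsGFF w := by
  induction h with
  | single h => exact hs.of_posStep h
  | tail _ h ih => exact ih.of_posStep h

theorem IsGFF.EW : IsGFF [E, W] := by simpa using IsGFF.nabla [] [] 0 .base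

/-- A word is a fighting fish iff it can be obtained from `EW` or from `NS` by at
least one application of the operations `∇_k`, `△_k` with `k ≥ 1`; in particular
every fighting fish is a generalized fighting fish. -/
theorem fightingFish_iff_posSteps :
    (∀ w : List Letter, IsFF w ↔
      (Relation.TransGen PosStep [E, W] w ∨ Relation.TransGen PosStep [N, S] w)) ∧
    (∀ w : List Letter, IsFF w → IsGFF w) := by
  have hEW : PosStep [E, W] [E, N, W, S] := by simpa using PosStep.delta [E] [] 1 le_rfl
  have hirr : ¬ [W, N] <:+: [E, W] := by decide
  refine ⟨fun w => ⟨fun h => .inl (h.transGen_posStep hEW hirr), ?_⟩,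
    fun w h => IsGFF.EW.of_transGen_posStep (h.transGen_posStep hEW hirr)⟩
  rintro (h | h)
  · exact IsFF.of_transGen_posStep (.inl rfl) h
  · exact IsFF.of_transGen_posStep (.inr rfl) h
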